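/- arXiv:2102.07158 — 2 statements merged into one kernel-verified Lean document; each statement's English description precedes it below -/
import Mathlib

section
/- Let ω ≥ 0 and 0 < η ≤ 1/(ω+1). Fix x ∈ ℝ^d and vectors h_1, …, h_n ∈ ℝ^m, and let g_1, …, g_n : Ω → ℝ^m be random vectors on a probability space (Ω, F, ℙ) satisfying E[g_i] = h_i(x) − h_i and E‖g_i‖² ≤ (ω+1)‖h_i(x) − h_i‖² for each i. Then E[ Σ_{i=1}^n ‖(h_i + η g_i) − h_i(x*)‖² ] ≤ (1−η) Σ_{i=1}^n ‖h_i − h_i(x*)‖² + m n η ν² R² ‖x − x*‖². -/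
open MeasureTheory Filter
open scoped BigOperators

noncomputable section

abbrev Euc (d : ℕ) := EuclideanSpace ℝ (Fin d)

/-- Real inner product on Euclidean space. -/
def rinner {d : ℕ} (a x : Euc d) : ℝ := inner ℝ a x

/-- The rank-one matrix `a aᵀ`. -/
def outerMat {d : ℕ} (a : Euc d) : Matrix (Fin d) (Fin d) ℝ := fun p q => a p * a q

/-- `(1/(nm)) ∑_{ij} c_{ij} a_{ij} a_{ij}ᵀ`. -/
def Hmat {n m d : ℕ} (a : Fin n → Fin m → Euc d) (c : Fin n → Fin m → ℝ) :
    Matrix (Fin d) (Fin d) ℝ :=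
  ((n : ℝ) * m)⁻¹ • ∑ i, ∑ j, c i j • outerMat (a i j)

/-- Matrix-vector multiplication as a map on Euclidean space. -/
def mulVecE {d : ℕ} (M : Matrix (Fin d) (Fin d) ℝ) (v : Euc d) : Euc d := WithLp.toLp 2 (M.mulVec v)

/-- The vector `h_i(y) = (φ''_{i1}(⟨a_{i1},y⟩), …, φ''_{im}(⟨a_{im},y⟩)) ∈ ℝ^m`. -/
def hvecOf {n m d : ℕ} (a : Fin n → Fin m → Euc d) (φ'' : Fin n → Fin m → ℝ → ℝ)
    (i : Fin n) (y : Euc d) : Euc m :=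
  WithLp.toLp 2 (fun j => φ'' i j (rinner (a i j) y))

/-- Componentwise positive part on ℝ^m. -/
def posPartE {m : ℕ} (v : Euc m) : Euc m := WithLp.toLp 2 (fun j => max (v j) 0)

/-!
Write `u_i = h_i - h_i(x*)` and `v_i = h_i(x) - h_i`. Expanding the square and using `E g_i = v_i`,
`E ‖u_i + η g_i‖² = ‖u_i‖² + 2η⟪u_i, v_i⟫ + η² E‖g_i‖²`, and the variance bound together with
`η (ω + 1) ≤ 1` gives `η² E‖g_i‖² ≤ η ‖v_i‖²`, so the expectation is at most
`(1 - η) ‖u_i‖² + η ‖u_i + v_i‖²`. Finally `u_i + v_i = h_i(x) - h_i(x*)`, and each of its `m`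
coordinates is at most `ν R ‖x - x*‖` in absolute value by the Lipschitz bound on `φ''_{ij}` and
Cauchy–Schwarz.
-/

section StochasticStep

variable {E : Type*} [NormedAddCommGroup E] [InnerProductSpace ℝ E]

lemma norm_add_smul_sq_eq (u y : E) (η : ℝ) :
    ‖u + η • y‖ ^ 2 = ‖u‖ ^ 2 + 2 * η * inner ℝ u y + η ^ 2 * ‖y‖ ^ 2 := by
  rw [norm_add_sq_real, real_inner_smul_right, norm_smul, mul_pow, Real.norm_eq_abs, sq_abs]
  ring

variable {Ω : Type*} [MeasurableSpace Ω] {μ : Measure Ω} [IsProbabilityMeasure μ]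
  {G : Ω → E} (u : E) (η : ℝ)

lemma integrable_norm_add_smul_sq (hG : Integrable G μ)
    (hG2 : Integrable (fun t => ‖G t‖ ^ 2) μ) :
    Integrable (fun t => ‖u + η • G t‖ ^ 2) μ := by
  simp only [norm_add_smul_sq_eq]
  exact ((integrable_const _).add ((hG.const_inner u).const_mul _)).add (hG2.const_mul _)

variable [CompleteSpace E]

lemma integral_norm_add_smul_sq (hG : Integrable G μ)
    (hG2 : Integrable (fun t => ‖G t‖ ^ 2) μ) :
    ∫ t, ‖u + η • G t‖ ^ 2 ∂μ
      = ‖u‖ ^ 2 + 2 * η * inner ℝ u (∫ t, G t ∂μ) + η ^ 2 * ∫ t, ‖G t‖ ^ 2 ∂μ := by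
  have hlin : Integrable (fun t => 2 * η * inner ℝ u (G t)) μ := (hG.const_inner u).const_mul _
  have hconst_lin : Integrable (fun t => ‖u‖ ^ 2 + 2 * η * inner ℝ u (G t)) μ :=
    (integrable_const _).add hlin
  simp only [norm_add_smul_sq_eq]
  rw [integral_add hconst_lin (hG2.const_mul _),
    integral_add (integrable_const _) hlin, integral_const, integral_const_mul,
    integral_const_mul, integral_inner hG u, probReal_univ, one_smul]

lemma integral_norm_add_smul_sq_le {v : E} {K : ℝ} (hη0 : 0 ≤ η) (hηK : η * K ≤ 1)
    (hG : Integrable G μ) (hG2 : Integrable (fun t => ‖G t‖ ^ 2) μ)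
    (hmean : ∫ t, G t ∂μ = v) (hvar : ∫ t, ‖G t‖ ^ 2 ∂μ ≤ K * ‖v‖ ^ 2) :
    ∫ t, ‖u + η • G t‖ ^ 2 ∂μ ≤ (1 - η) * ‖u‖ ^ 2 + η * ‖u + v‖ ^ 2 := by
  have hsecond : η ^ 2 * ∫ t, ‖G t‖ ^ 2 ∂μ ≤ η * ‖v‖ ^ 2 :=
    calc η ^ 2 * ∫ t, ‖G t‖ ^ 2 ∂μ ≤ η ^ 2 * (K * ‖v‖ ^ 2) := by gcongr
      _ = η * (η * K) * ‖v‖ ^ 2 := by ring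
      _ ≤ η * 1 * ‖v‖ ^ 2 := by gcongr
      _ = η * ‖v‖ ^ 2 := by ring
  rw [integral_norm_add_smul_sq u η hG hG2, hmean, norm_add_sq_real]
  linarith

end StochasticStep

lemma EuclideanSpace.norm_sq_le_of_forall_abs_le {ι : Type*} [Fintype ι]
    (w : EuclideanSpace ℝ ι) {c : ℝ} (hw : ∀ j, |w j| ≤ c) :
    ‖w‖ ^ 2 ≤ Fintype.card ι * c ^ 2 := by
  rw [EuclideanSpace.norm_sq_eq]
  calc ∑ j, ‖w j‖ ^ 2 ≤ ∑ _j : ι, c ^ 2 :=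
        Finset.sum_le_sum fun j _ => by
          rw [Real.norm_eq_abs]
          exact sq_le_sq' (by linarith [abs_nonneg (w j), hw j]) (hw j)
    _ = Fintype.card ι * c ^ 2 := by simp

lemma abs_sub_comp_rinner_le {d : ℕ} {ψ : ℝ → ℝ} {ν R : ℝ} (hν : 0 ≤ ν)
    (hψ : ∀ s t, |ψ s - ψ t| ≤ ν * |s - t|) {b : Euc d} (hb : ‖b‖ ≤ R) (x y : Euc d) :
    |ψ (rinner b x) - ψ (rinner b y)| ≤ ν * R * ‖x - y‖ :=
  calc |ψ (rinner b x) - ψ (rinner b y)| ≤ ν * |inner ℝ b (x - y)| := by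
        simpa [rinner, inner_sub_right] using hψ (rinner b x) (rinner b y)
    _ ≤ ν * (‖b‖ * ‖x - y‖) := by gcongr; exact abs_real_inner_le_norm _ _
    _ ≤ ν * R * ‖x - y‖ := by rw [← mul_assoc]; gcongr

lemma norm_hvecOf_sub_sq_le {n m d : ℕ} {ν R : ℝ} (hν : 0 ≤ ν) (a : Fin n → Fin m → Euc d)
    (φ'' : Fin n → Fin m → ℝ → ℝ) (hlip : ∀ i j s t, |φ'' i j s - φ'' i j t| ≤ ν * |s - t|)
    (hRub : ∀ i j, ‖a i j‖ ≤ R) (i : Fin n) (x y : Euc d) :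
    ‖hvecOf a φ'' i x - hvecOf a φ'' i y‖ ^ 2 ≤ m * (ν ^ 2 * R ^ 2 * ‖x - y‖ ^ 2) := by
  have hcoord := EuclideanSpace.norm_sq_le_of_forall_abs_le (hvecOf a φ'' i x - hvecOf a φ'' i y)
    fun j => by
      simpa [hvecOf] using abs_sub_comp_rinner_le hν (hlip i j) (hRub i j) x y
  rw [Fintype.card_fin] at hcoord
  linarith [show (ν * R * ‖x - y‖) ^ 2 = ν ^ 2 * R ^ 2 * ‖x - y‖ ^ 2 by ring]

theorem nl2_learning_step_general
    {n m d : ℕ}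
    (ν R : ℝ) (hν : 0 ≤ ν)
    (a : Fin n → Fin m → Euc d)
    (φ'' : Fin n → Fin m → ℝ → ℝ)
    (hlip : ∀ i j s t, |φ'' i j s - φ'' i j t| ≤ ν * |s - t|)
    (hRub : ∀ i j, ‖a i j‖ ≤ R)
    (xstar : Euc d)
    (ωc η : ℝ) (hωc : 0 ≤ ωc) (hη0 : 0 < η) (hη : η ≤ 1 / (ωc + 1))
    (x : Euc d) (h : Fin n → Euc m)
    (Ω : Type*) [MeasurableSpace Ω] (ℙ : Measure Ω) [IsProbabilityMeasure ℙ]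
    (g : Fin n → Ω → Euc m)
    (hgint : ∀ i, Integrable (g i) ℙ)
    (hgsqint : ∀ i, Integrable (fun t => ‖g i t‖ ^ 2) ℙ)
    (hgmean : ∀ i, (∫ t, g i t ∂ℙ) = hvecOf a φ'' i x - h i)
    (hgvar : ∀ i, (∫ t, ‖g i t‖ ^ 2 ∂ℙ) ≤ (ωc + 1) * ‖hvecOf a φ'' i x - h i‖ ^ 2) :
    (∫ t, (∑ i, ‖(h i + η • g i t) - hvecOf a φ'' i xstar‖ ^ 2) ∂ℙ) ≤
      (1 - η) * ∑ i, ‖h i - hvecOf a φ'' i xstar‖ ^ 2 +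
        (m : ℝ) * n * η * ν ^ 2 * R ^ 2 * ‖x - xstar‖ ^ 2 := by
  set u : Fin n → Euc m := fun i => h i - hvecOf a φ'' i xstar
  have hshift : ∀ i t, (h i + η • g i t) - hvecOf a φ'' i xstar = u i + η • g i t := by
    intro i t; simp only [u]; abel
  have hηω : η * (ωc + 1) ≤ 1 := by rwa [le_div_iff₀ (by linarith)] at hη
  have hstep : ∀ i, ∫ t, ‖u i + η • g i t‖ ^ 2 ∂ℙ
      ≤ (1 - η) * ‖u i‖ ^ 2 + η * (m * (ν ^ 2 * R ^ 2 * ‖x - xstar‖ ^ 2)) := by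
    intro i
    refine (integral_norm_add_smul_sq_le (u i) η hη0.le hηω (hgint i) (hgsqint i)
      (hgmean i) (hgvar i)).trans ?_
    have hsum : u i + (hvecOf a φ'' i x - h i) = hvecOf a φ'' i x - hvecOf a φ'' i xstar := by
      simp only [u]; abel
    rw [hsum]
    gcongr
    exact norm_hvecOf_sub_sq_le hν a φ'' hlip hRub i x xstar
  simp only [hshift]
  rw [integral_finsetSum _ fun i _ =>
    integrable_norm_add_smul_sq (u i) η (hgint i) (hgsqint i)]
  refine (Finset.sum_le_sum fun i _ => hstep i).trans (le_of_eq ?_)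
  rw [Finset.sum_add_distrib, ← Finset.mul_sum, Finset.sum_const, Finset.card_univ,
    Fintype.card_fin, nsmul_eq_mul]
  ring

/-- one step of the NL2 learning procedure (Lemma on ℋ^k, no positive part). -/
theorem nl2_learning_step
    {n m d : ℕ} (hn : 0 < n) (hm : 0 < m) (hd : 0 < d)
    (ν γ lam R : ℝ) (hν : 0 ≤ ν) (hγ : 0 < γ) (hlam : 0 ≤ lam)
    (a : Fin n → Fin m → Euc d) (φ : Fin n → Fin m → ℝ → ℝ)
    (φ'' : Fin n → Fin m → ℝ → ℝ) (hφ'' : ∀ i j, φ'' i j = deriv (deriv (φ i j)))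
    (hsmooth : ∀ i j, ContDiff ℝ 2 (φ i j))
    (hbdd : ∀ i j t, |φ'' i j t| ≤ γ)
    (hlip : ∀ i j s t, |φ'' i j s - φ'' i j t| ≤ ν * |s - t|)
    (hRub : ∀ i j, ‖a i j‖ ≤ R) (hRmem : ∃ i j, R = ‖a i j‖)
    (P : Euc d → ℝ)
    (hP : ∀ y, P y = ((n : ℝ) * m)⁻¹ * (∑ i, ∑ j, φ i j (rinner (a i j) y))
        + lam / 2 * ‖y‖ ^ 2)
    (xstar : Euc d) (hmin : ∀ y, P xstar ≤ P y)
    (ωc η : ℝ) (hωc : 0 ≤ ωc) (hη0 : 0 < η) (hη : η ≤ 1 / (ωc + 1))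
    (x : Euc d) (h : Fin n → Euc m)
    (Ω : Type*) [MeasurableSpace Ω] (ℙ : Measure Ω) [IsProbabilityMeasure ℙ]
    (g : Fin n → Ω → Euc m)
    (hgint : ∀ i, Integrable (g i) ℙ)
    (hgsqint : ∀ i, Integrable (fun t => ‖g i t‖ ^ 2) ℙ)
    (hgmean : ∀ i, (∫ t, g i t ∂ℙ) = hvecOf a φ'' i x - h i)
    (hgvar : ∀ i, (∫ t, ‖g i t‖ ^ 2 ∂ℙ) ≤ (ωc + 1) * ‖hvecOf a φ'' i x - h i‖ ^ 2) :
    (∫ t, (∑ i, ‖(h i + η • g i t) - hvecOf a φ'' i xstar‖ ^ 2) ∂ℙ) ≤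
      (1 - η) * ∑ i, ‖h i - hvecOf a φ'' i xstar‖ ^ 2 +
        (m : ℝ) * n * η * ν ^ 2 * R ^ 2 * ‖x - xstar‖ ^ 2 :=
  nl2_learning_step_general ν R hν a φ'' hlip hRub xstar ωc η hωc hη0 hη x h Ω ℙ g hgint hgsqint
    hgmean hgvar
end
end

section
/- Assume λ > 0. Fix x ∈ ℝ^d and nonnegative reals h_{ij} ≥ 0 (i ∈ [n], j ∈ [m]); write h_i = (h_{i1},…,h_{im}) ∈ ℝ^m. Define H = (1/(nm)) Σ_{i,j} h_{ij} a_{ij} a_{ij}ᵀ and the step x⁺ = x − (H + λ I)^{-1} ∇P(x). Then ‖x⁺ − x*‖² ≤ (2R⁴/(n m λ²)) · ( Σ_{i=1}^n ‖h_i − h_i(x*)‖² ) · ‖x − x*‖² + (ν² R⁶/(2λ²)) · ‖x − x*‖⁴. -/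
/-!
Write `M = H + λI`, `δ = x - x*` and `r_ij = ⟨a_ij, δ⟩`. Since `∇P(x*) = 0`,
`x⁺ - x* = M⁻¹ (M δ - (∇P(x) - ∇P(x*)))`, and the vector in brackets is `(1/(nm)) Σ e_ij a_ij` with
`e_ij = (c_ij - h_ij) r_ij - ρ_ij`, where `h_ij = φ''_ij(⟨a_ij, x*⟩)` and `ρ_ij` is the first-order
Taylor remainder of `φ'_ij` at `⟨a_ij, x*⟩`; the Lipschitz bound on `φ''_ij` gives `|ρ_ij| ≤ ν r_ij² / 2`.
As `c ≥ 0`, `⟪v, M v⟫ ≥ λ‖v‖²`, so `M` is invertible with `‖M⁻¹ u‖ ≤ ‖u‖ / λ`. The estimate then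
follows from `|r_ij| ≤ R‖δ‖`, `(A + B)² ≤ 2A² + 2B²` and Cauchy–Schwarz
`(Σ |c_ij - h_ij|)² ≤ nm Σ (c_ij - h_ij)²`.
-/

open MeasureTheory Filter
open scoped BigOperators

noncomputable section

theorem abs_intervalIntegral_le_of_abs_le_mul_abs_sub {f : ℝ → ℝ} {ν t : ℝ}
    (hf_le : ∀ u, |f u| ≤ ν * |u - t|) (s : ℝ) :
    |∫ u in t..s, (f u)| ≤ ν / 2 * (s - t) ^ 2 := by
  have key : ∀ {g : ℝ → ℝ}, (∀ u, |g u| ≤ ν * |u - t|) → ∀ b, t ≤ b →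
      |∫ u in t..b, (g u)| ≤ ν / 2 * (b - t) ^ 2 := by
    intro g hg_le b htb
    rw [← Real.norm_eq_abs]
    calc ‖∫ u in t..b, g u‖ ≤ ∫ u in t..b, ν * (u - t) := by
          refine intervalIntegral.norm_integral_le_of_norm_le htb (ae_of_all volume fun u hu => ?_)
            ((by fun_prop : Continuous fun u => ν * (u - t)).intervalIntegrable _ _)
          rw [Real.norm_eq_abs, ← abs_of_nonneg (sub_nonneg.mpr hu.1.le)]
          exact hg_le u
      _ = ν / 2 * (b - t) ^ 2 := by
          rw [intervalIntegral.integral_comp_sub_right (fun u => ν * u),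
            intervalIntegral.integral_const_mul, integral_id]
          ring
  rcases le_total t s with hts | hst
  · exact key hf_le s hts
  · have hrefl : ∫ u in t..s, (f u) = -∫ u in t..2 * t - s, f (2 * t - u) := by
      rw [intervalIntegral.integral_comp_sub_left, intervalIntegral.integral_symm]
      ring_nf
    rw [hrefl, abs_neg]
    refine (key (g := fun u => f (2 * t - u))
      (fun u => (hf_le _).trans_eq (by rw [← abs_neg]; ring_nf)) (2 * t - s) (by linarith)).trans_eq ?_
    ring

theorem abs_deriv_sub_sub_le_of_lipschitz {φ : ℝ → ℝ} {ν t : ℝ} (hφ : ContDiff ℝ 2 φ)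
    (hlip : ∀ u, |deriv (deriv φ) u - deriv (deriv φ) t| ≤ ν * |u - t|) (s : ℝ) :
    |deriv φ s - deriv φ t - deriv (deriv φ) t * (s - t)| ≤ ν / 2 * (s - t) ^ 2 := by
  have hφ' : ContDiff ℝ 1 (deriv φ) := hφ.iterate_deriv' 1 1
  have hφ'' : Continuous (deriv (deriv φ)) := hφ'.continuous_deriv le_rfl
  have hftc : ∫ u in t..s, (deriv (deriv φ) u - deriv (deriv φ) t)
      = deriv φ s - deriv φ t - deriv (deriv φ) t * (s - t) := by
    rw [intervalIntegral.integral_sub (hφ''.intervalIntegrable t s) intervalIntegrable_const,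
      intervalIntegral.integral_deriv_eq_sub (fun u _ => (hφ'.differentiable one_ne_zero) u)
        (hφ''.intervalIntegrable t s), intervalIntegral.integral_const, smul_eq_mul, mul_comm]
  rw [← hftc]
  exact abs_intervalIntegral_le_of_abs_le_mul_abs_sub hlip s

theorem mulVecE_eq_toLpLin {d : ℕ} (M : Matrix (Fin d) (Fin d) ℝ) (v : Euc d) :
    mulVecE M v = Matrix.toLpLin 2 2 M v := rfl

theorem mulVecE_one {d : ℕ} (v : Euc d) : mulVecE 1 v = v := by
  simp [mulVecE_eq_toLpLin]

theorem mulVecE_mulVecE {d : ℕ} (M N : Matrix (Fin d) (Fin d) ℝ) (v : Euc d) :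
    mulVecE M (mulVecE N v) = mulVecE (M * N) v := by
  simp [mulVecE_eq_toLpLin, Matrix.toLpLin_mul_same]

theorem mulVecE_add_smul_one {d : ℕ} (M : Matrix (Fin d) (Fin d) ℝ) (lam : ℝ) (v : Euc d) :
    mulVecE (M + lam • 1) v = mulVecE M v + lam • v := by
  simp [mulVecE_eq_toLpLin]

theorem mulVecE_outerMat {d : ℕ} (a v : Euc d) : mulVecE (outerMat a) v = rinner a v • a := by
  ext p
  simp only [mulVecE, outerMat, Matrix.mulVec, dotProduct, rinner, PiLp.inner_apply,
    PiLp.smul_apply, smul_eq_mul, Finset.sum_mul]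
  exact Finset.sum_congr rfl fun q _ => by simp; ring

theorem mulVecE_Hmat {n m d : ℕ} (a : Fin n → Fin m → Euc d) (c : Fin n → Fin m → ℝ)
    (v : Euc d) :
    mulVecE (Hmat a c) v = ((n : ℝ) * m)⁻¹ • ∑ i, ∑ j, (c i j * rinner (a i j) v) • a i j := by
  rw [mulVecE_eq_toLpLin]
  simp only [Hmat, map_smul, map_sum, LinearMap.smul_apply, LinearMap.coe_sum, Finset.sum_apply]
  simp only [← mulVecE_eq_toLpLin, mulVecE_outerMat, mul_smul]

theorem rinner_mulVecE_Hmat_nonneg {n m d : ℕ} (a : Fin n → Fin m → Euc d)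
    {c : Fin n → Fin m → ℝ} (hc : ∀ i j, 0 ≤ c i j) (v : Euc d) :
    0 ≤ rinner v (mulVecE (Hmat a c) v) := by
  simp only [mulVecE_Hmat, rinner, real_inner_smul_right, inner_sum, real_inner_comm v (a _ _)]
  exact mul_nonneg (by positivity) (Finset.sum_nonneg fun i _ => Finset.sum_nonneg fun j _ => by
    rw [mul_assoc]
    exact mul_nonneg (hc i j) (mul_self_nonneg _))

theorem mul_norm_sq_le_rinner_mulVecE_Hmat_add_smul_one {n m d : ℕ}
    (a : Fin n → Fin m → Euc d) {c : Fin n → Fin m → ℝ} (hc : ∀ i j, 0 ≤ c i j) (lam : ℝ)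
    (v : Euc d) :
    lam * ‖v‖ ^ 2 ≤ rinner v (mulVecE (Hmat a c + lam • 1) v) := by
  have hH := rinner_mulVecE_Hmat_nonneg a hc v
  rw [mulVecE_add_smul_one]
  unfold rinner at *
  rw [inner_add_right, real_inner_smul_right, real_inner_self_eq_norm_sq]
  linarith

theorem mulVecE_Hmat_add_smul_one_sub_sub_eq {n m d : ℕ} (a : Fin n → Fin m → Euc d)
    (c : Fin n → Fin m → ℝ) (ψ : Fin n → Fin m → ℝ → ℝ) (lam : ℝ) (x xstar : Euc d) :
    mulVecE (Hmat a c + lam • 1) (x - xstar)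
        - ((((n : ℝ) * m)⁻¹ • ∑ i, ∑ j, ψ i j (rinner (a i j) x) • a i j + lam • x)
          - (((n : ℝ) * m)⁻¹ • ∑ i, ∑ j, ψ i j (rinner (a i j) xstar) • a i j + lam • xstar))
      = ((n : ℝ) * m)⁻¹ • ∑ i, ∑ j, (c i j * rinner (a i j) (x - xstar)
          - (ψ i j (rinner (a i j) x) - ψ i j (rinner (a i j) xstar))) • a i j := by
  simp only [mulVecE_add_smul_one, mulVecE_Hmat, sub_smul, Finset.sum_sub_distrib]
  module

section Coercive

variable {d : ℕ} {M : Matrix (Fin d) (Fin d) ℝ} {lam : ℝ}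

theorem mul_norm_le_norm_mulVecE_of_coercive
    (hM : ∀ v, lam * ‖v‖ ^ 2 ≤ rinner v (mulVecE M v)) (v : Euc d) :
    lam * ‖v‖ ≤ ‖mulVecE M v‖ := by
  rcases (norm_nonneg v).eq_or_lt with hv | hv
  · rw [← hv, mul_zero]
    exact norm_nonneg _
  · refine le_of_mul_le_mul_left ?_ hv
    calc ‖v‖ * (lam * ‖v‖) = lam * ‖v‖ ^ 2 := by ring
      _ ≤ rinner v (mulVecE M v) := hM v
      _ ≤ ‖v‖ * ‖mulVecE M v‖ := real_inner_le_norm _ _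

theorem isUnit_det_of_coercive (hlam : 0 < lam)
    (hM : ∀ v, lam * ‖v‖ ^ 2 ≤ rinner v (mulVecE M v)) : IsUnit M.det := by
  rw [← Matrix.isUnit_iff_isUnit_det, ← Matrix.mulVec_injective_iff_isUnit]
  intro v w hvw
  have h := mul_norm_le_norm_mulVecE_of_coercive hM (WithLp.toLp 2 (v - w))
  rw [show mulVecE M (WithLp.toLp 2 (v - w)) = 0 by simp [mulVecE, Matrix.mulVec_sub, hvw],
    norm_zero] at h
  have h0 : ‖WithLp.toLp 2 (v - w)‖ = 0 :=
    le_antisymm (nonpos_of_mul_nonpos_right h hlam) (norm_nonneg _)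
  simpa [sub_eq_zero] using h0

theorem norm_mulVecE_inv_le_of_coercive (hlam : 0 < lam)
    (hM : ∀ v, lam * ‖v‖ ^ 2 ≤ rinner v (mulVecE M v)) (u : Euc d) :
    ‖mulVecE M⁻¹ u‖ ≤ ‖u‖ / lam := by
  rw [le_div_iff₀ hlam, mul_comm]
  simpa [mulVecE_mulVecE, Matrix.mul_nonsing_inv _ (isUnit_det_of_coercive hlam hM), mulVecE_one]
    using mul_norm_le_norm_mulVecE_of_coercive hM (mulVecE M⁻¹ u)

end Coercive

theorem sub_mulVecE_inv_sub_eq {d : ℕ} {M : Matrix (Fin d) (Fin d) ℝ} (hM : IsUnit M.det)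
    (x xstar g : Euc d) :
    x - mulVecE M⁻¹ g - xstar = mulVecE M⁻¹ (mulVecE M (x - xstar) - g) := by
  rw [mulVecE_eq_toLpLin M⁻¹ (_ - g), map_sub, ← mulVecE_eq_toLpLin, ← mulVecE_eq_toLpLin,
    mulVecE_mulVecE, Matrix.nonsing_inv_mul _ hM, mulVecE_one]
  abel

open InnerProductSpace in
theorem hasFDerivAt_comp_rinner {d : ℕ} {φ : ℝ → ℝ} (a y : Euc d)
    (hφ : DifferentiableAt ℝ φ (rinner a y)) :
    HasFDerivAt (fun z => φ (rinner a z)) (toDual ℝ (Euc d) (deriv φ (rinner a y) • a)) y := by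
  refine (hφ.hasDerivAt.comp_hasFDerivAt y (innerSL ℝ a).hasFDerivAt).congr_fderiv ?_
  ext v
  simp [rinner]

open InnerProductSpace in
theorem hasGradientAt_average_comp_rinner_add_norm_sq {n m d : ℕ} (a : Fin n → Fin m → Euc d)
    {φ : Fin n → Fin m → ℝ → ℝ} (hφ : ∀ i j, Differentiable ℝ (φ i j)) (lam : ℝ) (y : Euc d) :
    HasGradientAt
      (fun z => ((n : ℝ) * m)⁻¹ * (∑ i, ∑ j, φ i j (rinner (a i j) z)) + lam / 2 * ‖z‖ ^ 2)
      (((n : ℝ) * m)⁻¹ • (∑ i, ∑ j, deriv (φ i j) (rinner (a i j) y) • a i j) + lam • y) y := by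
  rw [hasGradientAt_iff_hasFDerivAt]
  have hsum := HasFDerivAt.fun_sum (u := Finset.univ) fun i _ =>
    HasFDerivAt.fun_sum (u := Finset.univ) fun j _ =>
      hasFDerivAt_comp_rinner (a i j) y ((hφ i j) (rinner (a i j) y))
  refine ((hsum.const_mul _).add
    ((hasStrictFDerivAt_norm_sq y).hasFDerivAt.const_mul (lam / 2))).congr_fderiv ?_
  ext v
  simp [Finset.mul_sum]
  ring

theorem sq_sum_sum_le_card_mul_sum_sum_sq {n m : ℕ} (e : Fin n → Fin m → ℝ) :
    (∑ i, ∑ j, e i j) ^ 2 ≤ (n * m : ℝ) * ∑ i, ∑ j, e i j ^ 2 := by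
  simpa [← Fintype.sum_prod_type'] using
    sq_sum_le_card_mul_sum_sq (s := Finset.univ) (f := fun p : Fin n × Fin m => e p.1 p.2)

theorem norm_average_sq_le {E : Type*} [SeminormedAddCommGroup E] [NormedSpace ℝ E] {n m : ℕ}
    (hn : 0 < n) (hm : 0 < m) (v : Fin n → Fin m → E) (e : Fin n → Fin m → ℝ) (K B : ℝ)
    (hv : ∀ i j, ‖v i j‖ ≤ K * |e i j| + B) :
    ‖((n : ℝ) * m)⁻¹ • ∑ i, ∑ j, v i j‖ ^ 2
      ≤ 2 * K ^ 2 / (n * m) * ∑ i, ∑ j, e i j ^ 2 + 2 * B ^ 2 := by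
  set N : ℝ := n * m
  have hN : 0 < N := by positivity
  set T := ∑ i, ∑ j, |e i j|
  have hT : T ^ 2 ≤ N * ∑ i, ∑ j, e i j ^ 2 := by
    simpa only [sq_abs] using sq_sum_sum_le_card_mul_sum_sum_sq fun i j => |e i j|
  have hnorm : ‖N⁻¹ • ∑ i, ∑ j, v i j‖ ≤ N⁻¹ * K * T + B :=
    calc ‖N⁻¹ • ∑ i, ∑ j, v i j‖ = N⁻¹ * ‖∑ i, ∑ j, v i j‖ := by
          rw [norm_smul, Real.norm_of_nonneg (inv_nonneg.2 hN.le)]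
      _ ≤ N⁻¹ * ∑ i, ∑ j, (K * |e i j| + B) := by
          gcongr
          exact (norm_sum_le _ _).trans (Finset.sum_le_sum fun i _ =>
            (norm_sum_le _ _).trans (Finset.sum_le_sum fun j _ => hv i j))
      _ = N⁻¹ * K * T + B := by
          simp only [Finset.sum_add_distrib, ← Finset.mul_sum, Finset.sum_const, Finset.card_univ,
            Fintype.card_fin, nsmul_eq_mul]
          field_simp
          ring
  calc ‖N⁻¹ • ∑ i, ∑ j, v i j‖ ^ 2 ≤ (N⁻¹ * K * T + B) ^ 2 :=
        pow_le_pow_left₀ (norm_nonneg _) hnorm 2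
    _ ≤ 2 * ((N⁻¹ * K) ^ 2 * T ^ 2 + B ^ 2) := by rw [← mul_pow]; exact add_sq_le
    _ ≤ 2 * ((N⁻¹ * K) ^ 2 * (N * ∑ i, ∑ j, e i j ^ 2) + B ^ 2) := by gcongr
    _ = 2 * K ^ 2 / N * ∑ i, ∑ j, e i j ^ 2 + 2 * B ^ 2 := by field_simp

theorem norm_newton_residual_term_le {d : ℕ} {φ : ℝ → ℝ} {ν R : ℝ}
    (hφ : ContDiff ℝ 2 φ) (hν : 0 ≤ ν)
    (hlip : ∀ s t, |deriv (deriv φ) s - deriv (deriv φ) t| ≤ ν * |s - t|)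
    {a : Euc d} (ha : ‖a‖ ≤ R) (c : ℝ) (x xstar : Euc d) :
    ‖(c * rinner a (x - xstar) - (deriv φ (rinner a x) - deriv φ (rinner a xstar))) • a‖
      ≤ R ^ 2 * ‖x - xstar‖ * |c - deriv (deriv φ) (rinner a xstar)|
        + ν / 2 * R ^ 3 * ‖x - xstar‖ ^ 2 := by
  set r := rinner a (x - xstar)
  set t := rinner a xstar
  have hr : rinner a x = t + r := by simp [r, t, rinner, inner_sub_right]
  have hR : 0 ≤ R := (norm_nonneg a).trans ha
  have hrR : |r| ≤ R * ‖x - xstar‖ :=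
    (abs_real_inner_le_norm _ _).trans (mul_le_mul_of_nonneg_right ha (norm_nonneg _))
  have htaylor := abs_deriv_sub_sub_le_of_lipschitz hφ (fun u => hlip u t) (t + r)
  rw [add_sub_cancel_left] at htaylor
  have hcoeff : |c * r - (deriv φ (t + r) - deriv φ t)|
      ≤ |c - deriv (deriv φ) t| * |r| + ν / 2 * r ^ 2 :=
    calc |c * r - (deriv φ (t + r) - deriv φ t)|
        = |(c - deriv (deriv φ) t) * r - (deriv φ (t + r) - deriv φ t - deriv (deriv φ) t * r)| := by
          ring_nf
      _ ≤ |c - deriv (deriv φ) t| * |r| + ν / 2 * r ^ 2 := by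
          rw [← abs_mul]
          exact (abs_sub _ _).trans (add_le_add_right htaylor _)
  rw [hr, norm_smul, Real.norm_eq_abs]
  calc |c * r - (deriv φ (t + r) - deriv φ t)| * ‖a‖
      ≤ (|c - deriv (deriv φ) t| * (R * ‖x - xstar‖) + ν / 2 * (R * ‖x - xstar‖) ^ 2) * R := by
        rw [← sq_abs r] at hcoeff
        gcongr
        exact hcoeff.trans (by gcongr)
    _ = R ^ 2 * ‖x - xstar‖ * |c - deriv (deriv φ) t| + ν / 2 * R ^ 3 * ‖x - xstar‖ ^ 2 := by
        ring

theorem nl1_iterate_bound_general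
    {n m d : ℕ} (hn : 0 < n) (hm : 0 < m)
    (ν lam R : ℝ) (hν : 0 ≤ ν) (hlam : 0 < lam)
    (a : Fin n → Fin m → Euc d) (φ : Fin n → Fin m → ℝ → ℝ)
    (φ'' : Fin n → Fin m → ℝ → ℝ) (hφ'' : ∀ i j, φ'' i j = deriv (deriv (φ i j)))
    (hsmooth : ∀ i j, ContDiff ℝ 2 (φ i j))
    (hlip : ∀ i j s t, |φ'' i j s - φ'' i j t| ≤ ν * |s - t|)
    (hRub : ∀ i j, ‖a i j‖ ≤ R)
    (P : Euc d → ℝ)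
    (hP : ∀ y, P y = ((n : ℝ) * m)⁻¹ * (∑ i, ∑ j, φ i j (rinner (a i j) y))
        + lam / 2 * ‖y‖ ^ 2)
    (xstar : Euc d) (hmin : ∀ y, P xstar ≤ P y)
    (c : Fin n → Fin m → ℝ) (hc : ∀ i j, 0 ≤ c i j)
    (x xplus : Euc d)
    (hstep : xplus = x - mulVecE
        (Hmat a c + lam • (1 : Matrix (Fin d) (Fin d) ℝ))⁻¹ (gradient P x)) :
    ‖xplus - xstar‖ ^ 2 ≤
      2 * R ^ 4 / ((n : ℝ) * m * lam ^ 2) *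
        (∑ i, ∑ j, (c i j - φ'' i j (rinner (a i j) xstar)) ^ 2) * ‖x - xstar‖ ^ 2 +
      ν ^ 2 * R ^ 6 / (2 * lam ^ 2) * ‖x - xstar‖ ^ 4 := by
  set M := Hmat a c + lam • (1 : Matrix (Fin d) (Fin d) ℝ)
  have hM := mul_norm_sq_le_rinner_mulVecE_Hmat_add_smul_one a hc lam
  have hgrad : ∀ y, gradient P y = ((n : ℝ) * m)⁻¹ •
      (∑ i, ∑ j, deriv (φ i j) (rinner (a i j) y) • a i j) + lam • y := fun y =>
    (funext hP ▸ hasGradientAt_average_comp_rinner_add_norm_sq a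
      (fun i j => (hsmooth i j).differentiable two_ne_zero) lam y).gradient
  have hstar : gradient P xstar = 0 := by
    simp [gradient, IsLocalMin.fderiv_eq_zero (Filter.Eventually.of_forall hmin)]
  have hterm := fun i j => norm_newton_residual_term_le (hsmooth i j) hν
    (fun s t => hφ'' i j ▸ hlip i j s t) (hRub i j) (c i j) x xstar
  simp only [← hφ''] at hterm
  calc ‖xplus - xstar‖ ^ 2
      = ‖mulVecE M⁻¹ (mulVecE M (x - xstar) - (gradient P x - gradient P xstar))‖ ^ 2 := by
        rw [hstep, hstar, sub_zero, sub_mulVecE_inv_sub_eq (isUnit_det_of_coercive hlam hM)]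
    _ ≤ (‖mulVecE M (x - xstar) - (gradient P x - gradient P xstar)‖ / lam) ^ 2 := by
        gcongr
        exact norm_mulVecE_inv_le_of_coercive hlam hM _
    _ ≤ (2 * (R ^ 2 * ‖x - xstar‖) ^ 2 / (n * m) *
          ∑ i, ∑ j, (c i j - φ'' i j (rinner (a i j) xstar)) ^ 2
          + 2 * (ν / 2 * R ^ 3 * ‖x - xstar‖ ^ 2) ^ 2) / lam ^ 2 := by
        rw [div_pow, hgrad, hgrad, mulVecE_Hmat_add_smul_one_sub_sub_eq]
        gcongr
        exact norm_average_sq_le hn hm _ _ _ _ hterm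
    _ = _ := by ring

/-- one NL1-type Newton step with nonnegative coefficients. -/
theorem nl1_iterate_bound
    {n m d : ℕ} (hn : 0 < n) (hm : 0 < m) (hd : 0 < d)
    (ν γ lam R : ℝ) (hν : 0 ≤ ν) (hγ : 0 < γ) (hlam : 0 < lam)
    (a : Fin n → Fin m → Euc d) (φ : Fin n → Fin m → ℝ → ℝ)
    (φ'' : Fin n → Fin m → ℝ → ℝ) (hφ'' : ∀ i j, φ'' i j = deriv (deriv (φ i j)))
    (hsmooth : ∀ i j, ContDiff ℝ 2 (φ i j))
    (hbdd : ∀ i j t, |φ'' i j t| ≤ γ)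
    (hlip : ∀ i j s t, |φ'' i j s - φ'' i j t| ≤ ν * |s - t|)
    (hRub : ∀ i j, ‖a i j‖ ≤ R) (hRmem : ∃ i j, R = ‖a i j‖)
    (P : Euc d → ℝ)
    (hP : ∀ y, P y = ((n : ℝ) * m)⁻¹ * (∑ i, ∑ j, φ i j (rinner (a i j) y))
        + lam / 2 * ‖y‖ ^ 2)
    (xstar : Euc d) (hmin : ∀ y, P xstar ≤ P y)
    (c : Fin n → Fin m → ℝ) (hc : ∀ i j, 0 ≤ c i j)
    (x xplus : Euc d)
    (hstep : xplus = x - mulVecE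
        (Hmat a c + lam • (1 : Matrix (Fin d) (Fin d) ℝ))⁻¹ (gradient P x)) :
    ‖xplus - xstar‖ ^ 2 ≤
      2 * R ^ 4 / ((n : ℝ) * m * lam ^ 2) *
        (∑ i, ∑ j, (c i j - φ'' i j (rinner (a i j) xstar)) ^ 2) * ‖x - xstar‖ ^ 2 +
      ν ^ 2 * R ^ 6 / (2 * lam ^ 2) * ‖x - xstar‖ ^ 4 :=
  nl1_iterate_bound_general hn hm ν lam R hν hlam a φ φ'' hφ'' hsmooth hlip hRub P hP xstar hmin c
    hc x xplus hstep
end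
end
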